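/- A string transduction m is realized by a finite-visit nondeterministic two-way generalized sequential machine if and only if m is realized by some nondeterministic two-way generalized sequential machine and m is finitary (i.e., for every input string w, the set of outputs { z | (w,z) ∈ m } is finite). -/

import Mathlib

/-- A (nondeterministic) two-way generalized sequential machine (2gsm):
finite state set, instructions read the tape symbol (input letter or one of the
two endmarkers, `Sum.inr false` = left marker, `Sum.inr true` = right marker),
and nondeterministically choose a new state, an output string and a head move
in {-1,0,+1}.  The final state has no instructions, and the overall set of
instructions is finite. -/
structure GSM2 (A B : Type) where
  Q : Type
  finQ : Fintype Q
  q0 : Q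
  qf : Q
  δ : Q → (A ⊕ Bool) → Set (Q × List B × ℤ)
  moveOK : ∀ q s t, t ∈ δ q s → t.2.2 = -1 ∨ t.2.2 = 0 ∨ t.2.2 = 1
  finalHalt : ∀ s, δ qf s = ∅
  instrFin : Set.Finite {x : Q × (A ⊕ Bool) × Q × List B × ℤ | x.2.2 ∈ δ x.1 x.2.1}

namespace GSM2

variable {A B : Type}

/-- The symbol stored at position `i` of the tape holding `⊢ w ⊣`
(positions `0, …, |w|+1`). -/
def tapeSym (w : List A) (i : ℤ) : Option (A ⊕ Bool) :=
  if i = 0 then some (Sum.inr false)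
  else if i = (w.length : ℤ) + 1 then some (Sum.inr true)
  else if 1 ≤ i ∧ i ≤ (w.length : ℤ) then (w[(i - 1).toNat]?).map Sum.inl
  else none

/-- One step of the machine on input `w`: from configuration `c` (state,
position), writing `α` to the output tape, to configuration `c'`. -/
def Step (M : GSM2 A B) (w : List A) (c : M.Q × ℤ) (α : List B) (c' : M.Q × ℤ) : Prop :=
  ∃ s, tapeSym w c.2 = some s ∧
    ∃ ε : ℤ, (c'.1, α, ε) ∈ M.δ c.1 s ∧ c'.2 = c.2 + ε ∧
      0 ≤ c'.2 ∧ c'.2 ≤ (w.length : ℤ) + 1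

/-- A computation (trace) is a sequence of configurations, each paired with
the output string produced by the step leading into it, consecutive entries
being related by `Step`. -/
def IsTrace (M : GSM2 A B) (w : List A) (tr : List ((M.Q × ℤ) × List B)) : Prop :=
  tr.Chain' (fun a b => M.Step w a.1 b.2 b.1)

/-- The total output written during a trace. -/
def output {Q : Type} (tr : List ((Q × ℤ) × List B)) : List B :=
  (tr.map (·.2)).flatten

/-- A successful (accepting) computation on input `w`: it starts in the
initial state on position 0 (with no output yet) and ends in the final state. -/
def Accepting (M : GSM2 A B) (w : List A) (tr : List ((M.Q × ℤ) × List B)) : Prop :=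
  M.IsTrace w tr ∧ tr.head? = some ((M.q0, 0), []) ∧
    ∃ c, tr.getLast? = some c ∧ c.1.1 = M.qf

/-- `M` realizes the pair `(w, z)`. -/
def Realizes (M : GSM2 A B) (w : List A) (z : List B) : Prop :=
  ∃ tr, M.Accepting w tr ∧ output tr = z

/-- `M` realizes the string transduction `m`. -/
def RealizesRel (M : GSM2 A B) (m : List A → List B → Prop) : Prop :=
  ∀ w z, M.Realizes w z ↔ m w z

/-- The number of visits a trace makes to tape position `i`. -/
def visits {Q : Type} (tr : List ((Q × ℤ) × List B)) (i : ℤ) : ℕ :=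
  tr.countP (fun c => decide (c.1.2 = i))

/-- A trace is `k`-visiting if it visits each tape position at most `k` times. -/
def KVisiting {Q : Type} (k : ℕ) (tr : List ((Q × ℤ) × List B)) : Prop :=
  ∀ i : ℤ, visits tr i ≤ k

/-- A deterministic 2gsm: in each state, on each tape symbol, at most one
instruction applies. -/
def Deterministic (M : GSM2 A B) : Prop :=
  ∀ q s, (M.δ q s).Subsingleton

/-- `M` is finite visit: for some constant `k`, every realized pair has an
accepting `k`-visiting computation. -/
def FiniteVisit (M : GSM2 A B) : Prop :=
  ∃ k, ∀ w z, M.Realizes w z →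
    ∃ tr, M.Accepting w tr ∧ output tr = z ∧ KVisiting k tr

end GSM2

/-- The transductions realized by nondeterministic 2gsm's. -/
def IsNGSM {A B : Type} (m : List A → List B → Prop) : Prop :=
  ∃ M : GSM2 A B, M.RealizesRel m

/-- The transductions realized by finite-visit nondeterministic 2gsm's. -/
def IsNGSMfin {A B : Type} (m : List A → List B → Prop) : Prop :=
  ∃ M : GSM2 A B, M.RealizesRel m ∧ M.FiniteVisit

/-- A transduction is finitary if every input has finitely many images. -/
def Finitary {A B : Type} (m : List A → List B → Prop) : Prop :=
  ∀ w, {z | m w z}.Finite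


/-!
A `k`-visiting accepting computation on `w` has length at most `k (|w| + 2)`, and each of its
entries is drawn from a finite set (a configuration on the tape together with the output of an
instruction), so a finite-visit machine has only finitely many outputs on each input.

Conversely, a shortest accepting computation for a pair `(w, z)` never repeats a configuration.
The segment between two equal configurations is a loop that can be iterated any number of times.
If the loop writes nothing, cutting it out gives a shorter computation for the same pair; if it
writes something, iterating it produces infinitely many outputs on `w`. Hence, for a finitary
relation, every realized pair has an accepting computation visiting each position at most `|Q|`
times.
-/

namespace List

variable {α β : Type*}

theorem finite_of_length_le_of_forall_mem {s : Set α} (hs : s.Finite) (n : ℕ) :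
    {l : List α | l.length ≤ n ∧ ∀ a ∈ l, a ∈ s}.Finite := by
  have := hs.to_subtype
  refine ((finite_length_le s n).image (map Subtype.val)).subset ?_
  rintro l ⟨hlen, hmem⟩
  exact ⟨l.attachWith (· ∈ s) hmem, by simpa using hlen, attachWith_map_subtype_val hmem⟩

theorem length_le_card_mul_of_count_le [DecidableEq α] {l : List α} {s : Finset α} {k : ℕ}
    (hs : ∀ a ∈ l, a ∈ s) (hk : ∀ a, l.count a ≤ k) : l.length ≤ s.card * k :=
  calc l.length = ∑ a ∈ l.toFinset, l.count a := (sum_toFinset_count_eq_length l).symm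
    _ ≤ ∑ a ∈ s, l.count a :=
      Finset.sum_le_sum_of_subset fun a ha => hs a (mem_toFinset.mp ha)
    _ ≤ s.card * k := by simpa using Finset.sum_le_card_nsmul s _ k fun a _ => hk a

theorem Nodup.length_le_card_of_forall_mem [DecidableEq α] {l : List α} {s : Finset α}
    (hl : l.Nodup) (hs : ∀ a ∈ l, a ∈ s) : l.length ≤ s.card := by
  rw [← toFinset_card_of_nodup hl]
  exact Finset.card_le_card fun a ha => hs a (mem_toFinset.mp ha)

theorem exists_eq_append_cons_append_cons_of_not_nodup_map {f : α → β} {l : List α}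
    (h : ¬(l.map f).Nodup) : ∃ P x L y S, l = P ++ x :: (L ++ y :: S) ∧ f x = f y := by
  induction l with
  | nil => simp at h
  | cons a t ih =>
    rw [map_cons, nodup_cons, not_and_or, not_not] at h
    rcases h with h | h
    · obtain ⟨y, hy, hfy⟩ := mem_map.mp h
      obtain ⟨L, S, rfl⟩ := append_of_mem hy
      exact ⟨[], a, L, y, S, rfl, hfy.symm⟩
    · obtain ⟨P, x, L, y, S, rfl, hxy⟩ := ih h
      exact ⟨a :: P, x, L, y, S, rfl, hxy⟩

variable {R : α → α → Prop}

theorem IsChain.splice {P P' S S' : List α} {x x' : α} (h : IsChain R (P ++ x :: S))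
    (h' : IsChain R (P' ++ x' :: S')) (hx : ∀ z, R x' z → R x z) :
    IsChain R (P ++ x :: S') := by
  rw [isChain_split] at h h' ⊢
  exact ⟨h.1, h'.2.imp_head (hx _)⟩

theorem IsChain.pump {P L S : List α} {x y : α} (h : IsChain R (P ++ x :: (L ++ y :: S)))
    (hxy : ∀ z, R x z ↔ R y z) (n : ℕ) :
    IsChain R (P ++ x :: ((replicate n (L ++ [y])).flatten ++ S)) := by
  have h' : IsChain R ((P ++ x :: L) ++ y :: S) := by simpa using h
  induction n with
  | zero => simpa using h.splice h' fun z => (hxy z).2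
  | succ n ih =>
    have hsplit : P ++ x :: ((replicate (n + 1) (L ++ [y])).flatten ++ S)
        = (P ++ x :: L) ++ y :: ((replicate n (L ++ [y])).flatten ++ S) := by
      simp [replicate_succ]
    rw [hsplit]
    exact h'.splice ih fun z => (hxy z).1

end List

namespace GSM2

variable {A B : Type} {M : GSM2 A B} {w : List A} {z : List B}

attribute [local instance] GSM2.finQ

def instrOutputs (M : GSM2 A B) : Set (List B) :=
  {α | ∃ q s q' ε, (q', α, ε) ∈ M.δ q s}

theorem instrOutputs_finite (M : GSM2 A B) : M.instrOutputs.Finite :=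
  (M.instrFin.image fun x => x.2.2.2.1).subset
    fun α ⟨q, s, q', ε, h⟩ => ⟨(q, s, q', α, ε), h, rfl⟩

/-- The empty output is that of the initial entry of a computation. -/
def entries (M : GSM2 A B) (w : List A) : Set ((M.Q × ℤ) × List B) :=
  {c | c.1.2 ∈ Set.Icc 0 ((w.length : ℤ) + 1) ∧ c.2 ∈ insert [] M.instrOutputs}

theorem entries_finite (M : GSM2 A B) (w : List A) : (M.entries w).Finite :=
  ((Set.finite_univ.prod (Set.finite_Icc _ _)).prod (M.instrOutputs_finite.insert [])).subset
    fun _ ⟨hpos, hout⟩ => ⟨⟨trivial, hpos⟩, hout⟩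

theorem Step.state_ne_final {c c' : M.Q × ℤ} {α : List B} (h : M.Step w c α c') :
    c.1 ≠ M.qf := by
  rintro hc
  obtain ⟨s, -, ε, hδ, -⟩ := h
  rw [hc, M.finalHalt] at hδ
  exact hδ

theorem Step.mk_mem_entries {c c' : M.Q × ℤ} {α : List B} (h : M.Step w c α c') :
    (c', α) ∈ M.entries w := by
  obtain ⟨s, -, ε, hδ, -, hlo, hhi⟩ := h
  exact ⟨⟨hlo, hhi⟩, Set.mem_insert_of_mem _ ⟨c.1, s, c'.1, ε, hδ⟩⟩

theorem Accepting.forall_mem_entries {tr : List ((M.Q × ℤ) × List B)} (h : M.Accepting w tr) :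
    ∀ c ∈ tr, c ∈ M.entries w := by
  refine h.1.induction _ _ (fun _ _ hstep _ => hstep.mk_mem_entries) fun hne => ?_
  rw [Option.some_inj.mp ((List.head?_eq_some_head hne).symm.trans h.2.1)]
  exact ⟨⟨le_rfl, by positivity⟩, Set.mem_insert _ _⟩

theorem visits_eq_count {Q : Type} (tr : List ((Q × ℤ) × List B)) (i : ℤ) :
    visits tr i = (tr.map (·.1.2)).count i := by
  simp only [visits, List.count, List.countP_map]
  congr

theorem Accepting.length_le {tr : List ((M.Q × ℤ) × List B)} {k : ℕ} (h : M.Accepting w tr)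
    (hk : KVisiting k tr) : tr.length ≤ (w.length + 2) * k := by
  have hcard : (Finset.Icc (0 : ℤ) (w.length + 1)).card = w.length + 2 := by simp; omega
  rw [← hcard, ← List.length_map (f := fun c => c.1.2)]
  refine List.length_le_card_mul_of_count_le ?_ fun i => visits_eq_count tr i ▸ hk i
  intro i hi
  obtain ⟨c, hc, rfl⟩ := List.mem_map.mp hi
  exact Finset.mem_Icc.mpr (h.forall_mem_entries c hc).1

theorem FiniteVisit.finite_realizes (h : M.FiniteVisit) (w : List A) :
    {z | M.Realizes w z}.Finite := by
  obtain ⟨k, hk⟩ := h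
  refine ((List.finite_of_length_le_of_forall_mem (M.entries_finite w)
    ((w.length + 2) * k)).image output).subset ?_
  intro z hz
  obtain ⟨tr, hacc, rfl, hvis⟩ := hk w z hz
  exact ⟨tr, ⟨hacc.length_le hvis, hacc.forall_mem_entries⟩, rfl⟩

theorem visits_le_card_of_nodup {Q : Type} [Fintype Q] {tr : List ((Q × ℤ) × List B)}
    (h : (tr.map Prod.fst).Nodup) (i : ℤ) : visits tr i ≤ Fintype.card Q := by
  classical
  have hvis : visits tr i = ((tr.map Prod.fst).filter (·.2 = i)).length := by
    simp [visits, List.countP_eq_length_filter, List.filter_map, Function.comp_def]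
  calc visits tr i ≤ (Finset.univ ×ˢ {i} : Finset (Q × ℤ)).card := by
        rw [hvis]
        refine (h.filter _).length_le_card_of_forall_mem fun c hc => ?_
        have hci : c.2 = i := by simpa using List.of_mem_filter hc
        exact Finset.mem_product.mpr ⟨Finset.mem_univ _, Finset.mem_singleton.mpr hci⟩
    _ = Fintype.card Q := by simp

theorem output_pump {Q : Type} (P L S : List ((Q × ℤ) × List B)) (x : (Q × ℤ) × List B)
    (n : ℕ) : output (P ++ x :: ((List.replicate n L).flatten ++ S))
      = output (P ++ [x]) ++ (List.replicate n (output L)).flatten ++ output S := by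
  induction n with
  | zero => simp [output]
  | succ n ih => simp_all [output, List.replicate_succ]

theorem Accepting.pump {P L S : List ((M.Q × ℤ) × List B)} {x y : (M.Q × ℤ) × List B}
    (h : M.Accepting w (P ++ x :: (L ++ y :: S))) (hxy : x.1 = y.1) (n : ℕ) :
    M.Accepting w (P ++ x :: ((List.replicate n (L ++ [y])).flatten ++ S)) := by
  obtain ⟨htr, hhead, c, hlast, hc⟩ := h
  -- `x` has a successor, so its state is not final; hence `y`, with the same state, is not last
  have hx : x.1.1 ≠ M.qf := by
    obtain ⟨u, hu⟩ : ∃ u, u ∈ (L ++ y :: S).head? := by cases L <;> simp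
    exact ((List.isChain_split.mp htr).2.rel_head? hu).state_ne_final
  obtain ⟨S, u, rfl⟩ : ∃ S' u, S = S' ++ [u] := by
    refine (List.eq_nil_or_concat' S).resolve_left ?_
    rintro rfl
    have hcy : c = y := by simpa [List.getLast?_cons] using hlast.symm
    exact hx (by rw [hxy, ← hcy]; exact hc)
  refine ⟨htr.pump (fun _ => hxy ▸ Iff.rfl) n, by cases P <;> simpa using hhead, c, ?_, hc⟩
  simpa [List.getLast?_cons] using hlast

theorem exists_accepting_map_fst_nodup (hfin : {z | M.Realizes w z}.Finite) (hz : M.Realizes w z) :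
    ∃ tr, M.Accepting w tr ∧ output tr = z ∧ (tr.map Prod.fst).Nodup := by
  obtain ⟨tr, ⟨hacc, hout⟩, hmin⟩ := (measure fun tr : List ((M.Q × ℤ) × List B) =>
    tr.length).wf.has_min {tr | M.Accepting w tr ∧ output tr = z} hz
  refine ⟨tr, hacc, hout, Classical.byContradiction fun hnd => ?_⟩
  obtain ⟨P, x, L, y, S, rfl, hxy⟩ :=
    List.exists_eq_append_cons_append_cons_of_not_nodup_map hnd
  rw [show P ++ x :: (L ++ y :: S) = P ++ x :: ((List.replicate 1 (L ++ [y])).flatten ++ S)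
    by simp, output_pump] at hout
  by_cases hloop : output (L ++ [y]) = []
  · refine hmin _ ⟨hacc.pump hxy 0, ?_⟩ ?_
    · rw [output_pump]
      simpa [hloop] using hout
    · show List.length _ < List.length _
      simp
  · refine Set.not_infinite.mpr hfin (Set.infinite_of_injective_forall_mem
      (f := fun n => output (P ++ x :: ((List.replicate n (L ++ [y])).flatten ++ S)))
      (fun a b hab => ?_) fun n => ⟨_, hacc.pump hxy n, rfl⟩)
    have hlen := congrArg List.length hab
    simp only [output_pump, List.length_append, List.length_flatten, List.map_replicate,
      List.sum_replicate, smul_eq_mul] at hlen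
    exact Nat.eq_of_mul_eq_mul_right (List.length_pos_iff.mpr hloop) (by omega)

theorem finiteVisit_iff : M.FiniteVisit ↔ ∀ w, {z | M.Realizes w z}.Finite := by
  refine ⟨FiniteVisit.finite_realizes, fun h => ⟨Fintype.card M.Q, fun w z hz => ?_⟩⟩
  obtain ⟨tr, hacc, hout, hnd⟩ := exists_accepting_map_fst_nodup (h w) hz
  exact ⟨tr, hacc, hout, visits_le_card_of_nodup hnd⟩

theorem RealizesRel.finiteVisit_iff_finitary {m : List A → List B → Prop}
    (hM : M.RealizesRel m) : M.FiniteVisit ↔ Finitary m := by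
  simp only [finiteVisit_iff, Finitary, show ∀ w z, M.Realizes w z ↔ m w z from hM]

end GSM2

/-- **Characterization of finite-visit 2gsm transductions** (Lemma
`finitary`): a string transduction is realized by a finite-visit
nondeterministic 2gsm iff it is realized by some nondeterministic 2gsm and it
is finitary. -/
theorem mso_gsm_stmt_3 {A B : Type} (m : List A → List B → Prop) :
    IsNGSMfin m ↔ IsNGSM m ∧ Finitary m := by
  constructor
  · rintro ⟨M, hM, hfv⟩
    exact ⟨⟨M, hM⟩, hM.finiteVisit_iff_finitary.mp hfv⟩
  · rintro ⟨⟨M, hM⟩, hfin⟩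
    exact ⟨M, hM, hM.finiteVisit_iff_finitary.mpr hfin⟩
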